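/- Let 𝔅 be a bornology with closed base on a metric space X. Then X satisfies S₁(𝒪_{𝔅ˢ}, Γ_{𝔅ˢ}) if and only if player ONE has no winning strategy in the game G₁(𝒪_{𝔅ˢ}, Γ_{𝔅ˢ}). -/

import Mathlib

open Set Metric Filter

/-- A bornology on a metric space: an ideal of subsets covering `X`. -/
structure BornologyOn (X : Type*) [MetricSpace X] where
  sets : Set (Set X)
  union_mem : ∀ {A B : Set X}, A ∈ sets → B ∈ sets → A ∪ B ∈ sets
  subset_mem : ∀ {A B : Set X}, A ∈ sets → B ⊆ A → B ∈ sets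
  covers : ∀ x : X, ∃ A ∈ sets, x ∈ A

variable {X : Type*} [MetricSpace X]

/-- `𝔅` has a closed base: a cofinal subfamily consisting of closed sets. -/
def HasClosedBase (𝔅 : BornologyOn X) : Prop :=
  ∃ base ⊆ 𝔅.sets, (∀ C ∈ base, IsClosed C) ∧ ∀ A ∈ 𝔅.sets, ∃ C ∈ base, A ⊆ C

/-- The `δ`-enlargement `B^δ = ⋃_{x ∈ B} S(x, δ)`. -/
def enlarge (B : Set X) (δ : ℝ) : Set X := ⋃ x ∈ B, ball x δ

/-- A `𝔅ˢ`-cover: `X ∉ 𝒰` and every `B ∈ 𝔅` has `B^δ ⊆ U` for some `U ∈ 𝒰`, `δ > 0`. -/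
def IsBCover (𝔅 : BornologyOn X) (𝒰 : Set (Set X)) : Prop :=
  univ ∉ 𝒰 ∧ ∀ B ∈ 𝔅.sets, ∃ U ∈ 𝒰, ∃ δ > 0, enlarge B δ ⊆ U

/-- An open `𝔅ˢ`-cover. -/
def IsOpenBCover (𝔅 : BornologyOn X) (𝒰 : Set (Set X)) : Prop :=
  (∀ U ∈ 𝒰, IsOpen U) ∧ (∀ x : X, ∃ U ∈ 𝒰, x ∈ U) ∧ IsBCover 𝔅 𝒰

/-- A `γ_{𝔅ˢ}`-cover (set form): infinite family of open sets such that for each `B ∈ 𝔅`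
all but finitely many members contain some enlargement of `B`. -/
def IsGammaBCover (𝔅 : BornologyOn X) (𝒰 : Set (Set X)) : Prop :=
  𝒰.Infinite ∧ (∀ U ∈ 𝒰, IsOpen U) ∧
    ∀ B ∈ 𝔅.sets, {U ∈ 𝒰 | ¬ ∃ δ > 0, enlarge B δ ⊆ U}.Finite

/-- A `γ_{𝔅ˢ}`-cover given as a sequence `{Uₙ}`: infinite, open, and for each `B ∈ 𝔅`
there are `n₀` and `δₙ > 0` with `B^{δₙ} ⊆ Uₙ` for all `n ≥ n₀`. -/
def IsGammaBSeq (𝔅 : BornologyOn X) (U : ℕ → Set X) : Prop :=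
  (Set.range U).Infinite ∧ (∀ n, IsOpen (U n)) ∧
    ∀ B ∈ 𝔅.sets, ∃ n₀, ∀ n ≥ n₀, ∃ δ > 0, enlarge B δ ⊆ U n

/-- A `γ`-cover: infinite family of open sets, every point in all but finitely many members. -/
def IsGammaCover (𝒰 : Set (Set X)) : Prop :=
  𝒰.Infinite ∧ (∀ U ∈ 𝒰, IsOpen U) ∧ ∀ x : X, {U ∈ 𝒰 | x ∉ U}.Finite

/-- An open cover of `X`. -/
def IsOpenCover (𝒰 : Set (Set X)) : Prop :=
  (∀ U ∈ 𝒰, IsOpen U) ∧ ∀ x : X, ∃ U ∈ 𝒰, x ∈ U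

/-- The family `𝒪_{𝔅ˢ}` of countable open `𝔅ˢ`-covers. -/
def OBs (𝔅 : BornologyOn X) : Set (Set (Set X)) :=
  {𝒰 | 𝒰.Countable ∧ IsOpenBCover 𝔅 𝒰}

/-- The family `Γ_{𝔅ˢ}` of countable `γ_{𝔅ˢ}`-covers. -/
def GBs (𝔅 : BornologyOn X) : Set (Set (Set X)) :=
  {𝒰 | 𝒰.Countable ∧ IsGammaBCover 𝔅 𝒰}

/-- The family `𝒪` of countable open covers. -/
def Ocov (X : Type*) [MetricSpace X] : Set (Set (Set X)) :=
  {𝒰 | 𝒰.Countable ∧ IsOpenCover 𝒰}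

/-- The selection principle `S₁(𝒜, ℬ)`. -/
def S1 (𝒜 ℬ : Set (Set (Set X))) : Prop :=
  ∀ 𝒰 : ℕ → Set (Set X), (∀ n, 𝒰 n ∈ 𝒜) →
    ∃ sel : ℕ → Set X, (∀ n, sel n ∈ 𝒰 n) ∧ Set.range sel ∈ ℬ

/-- The selection principle `S_fin(𝒜, ℬ)`. -/
def Sfin (𝒜 ℬ : Set (Set (Set X))) : Prop :=
  ∀ 𝒰 : ℕ → Set (Set X), (∀ n, 𝒰 n ∈ 𝒜) →
    ∃ 𝒱 : ℕ → Set (Set X), (∀ n, 𝒱 n ⊆ 𝒰 n ∧ (𝒱 n).Finite) ∧ (⋃ n, 𝒱 n) ∈ ℬ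

/-- The selection principle `U_fin(𝒜, ℬ)`. -/
def Ufin (𝒜 ℬ : Set (Set (Set X))) : Prop :=
  ∀ 𝒰 : ℕ → Set (Set X), (∀ n, 𝒰 n ∈ 𝒜) →
    ∃ 𝒱 : ℕ → Set (Set X), (∀ n, 𝒱 n ⊆ 𝒰 n ∧ (𝒱 n).Finite) ∧
      ((Set.range fun n => ⋃₀ 𝒱 n) ∈ ℬ ∨ ∃ n, ⋃₀ 𝒱 n = univ)

/-- ONE has a winning strategy in `G₁(𝒜, ℬ)`. -/
def OneWinsG1 (𝒜 ℬ : Set (Set (Set X))) : Prop :=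
  ∃ σ : List (Set X) → Set (Set X),
    (∀ h, σ h ∈ 𝒜) ∧
    ∀ play : ℕ → Set X,
      (∀ n, play n ∈ σ (List.ofFn fun i : Fin n => play i.1)) →
      Set.range play ∉ ℬ

/-- ONE has a winning strategy in `G_fin(𝒜, ℬ)`. -/
def OneWinsGfin (𝒜 ℬ : Set (Set (Set X))) : Prop :=
  ∃ σ : List (Set (Set X)) → Set (Set X),
    (∀ h, σ h ∈ 𝒜) ∧
    ∀ play : ℕ → Set (Set X),
      (∀ n, play n ⊆ σ (List.ofFn fun i : Fin n => play i.1) ∧ (play n).Finite) →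
      (⋃ n, play n) ∉ ℬ

/-- The winning condition in the `𝔅ˢ`-Hurewicz game / property: every `B ∈ 𝔅` is
eventually `δ`-enlarged into some member of `𝒱ₙ`. -/
def HurSel (𝔅 : BornologyOn X) (𝒱 : ℕ → Set (Set X)) : Prop :=
  ∀ B ∈ 𝔅.sets, ∃ n₀, ∀ n ≥ n₀, ∃ δ > 0, ∃ U ∈ 𝒱 n, enlarge B δ ⊆ U

/-- The strong `𝔅`-Hurewicz property. -/
def BsHurewicz (𝔅 : BornologyOn X) : Prop :=
  ∀ 𝒰 : ℕ → Set (Set X), (∀ n, 𝒰 n ∈ OBs 𝔅) →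
    ∃ 𝒱 : ℕ → Set (Set X), (∀ n, 𝒱 n ⊆ 𝒰 n ∧ (𝒱 n).Finite) ∧ HurSel 𝔅 𝒱

/-- ONE has a winning strategy in the `𝔅ˢ`-Hurewicz game. -/
def OneWinsHurewicz (𝔅 : BornologyOn X) : Prop :=
  ∃ σ : List (Set (Set X)) → Set (Set X),
    (∀ h, σ h ∈ OBs 𝔅) ∧
    ∀ play : ℕ → Set (Set X),
      (∀ n, play n ⊆ σ (List.ofFn fun i : Fin n => play i.1) ∧ (play n).Finite) →
      ¬ HurSel 𝔅 play

/-- A `𝔅ˢ`-groupable cover. -/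
def BsGroupable (𝔅 : BornologyOn X) (𝒰 : Set (Set X)) : Prop :=
  ∃ 𝒢 : ℕ → Set (Set X), (∀ n, (𝒢 n).Finite) ∧
    (∀ m n, m ≠ n → Disjoint (𝒢 m) (𝒢 n)) ∧ (⋃ n, 𝒢 n) = 𝒰 ∧ HurSel 𝔅 𝒢

/-- The family `𝒪_{𝔅ˢ}^{gp}` of `𝔅ˢ`-groupable open covers. -/
def OBsgp (𝔅 : BornologyOn X) : Set (Set (Set X)) :=
  {𝒰 | IsOpenCover 𝒰 ∧ BsGroupable 𝔅 𝒰}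

/-- The basic `τ_𝔅ˢ` neighbourhood `[B, ε]ˢ(f)` in `C(X)`. -/
def sball (f : C(X, ℝ)) (B : Set X) (ε : ℝ) : Set C(X, ℝ) :=
  {g | ∃ δ > 0, ∀ x ∈ enlarge B δ, |f x - g x| < ε}

/-- The topology `τ_𝔅ˢ` of strong uniform convergence on `𝔅` on `C(X)`. -/
def tauBs (𝔅 : BornologyOn X) : TopologicalSpace C(X, ℝ) :=
  TopologicalSpace.generateFrom
    {S | ∃ f : C(X, ℝ), ∃ B ∈ 𝔅.sets, ∃ ε > 0, S = sball f B ε}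

/-- Countable `T`-tightness of a topological space. -/
def CountableTTightness {Y : Type*} (t : TopologicalSpace Y) : Prop :=
  ∀ ρ : Cardinal.{0}, ρ.IsRegular → Cardinal.aleph0 < ρ →
    ∀ A : Ordinal.{0} → Set Y, (∀ α β, α ≤ β → A α ⊆ A β) →
      (∀ α, α < ρ.ord → @IsClosed _ t (A α)) →
      @IsClosed _ t (⋃ α ∈ {α | α < ρ.ord}, A α)

/-!
Pruning ONE's strategy `σ` to `σ h \ h` keeps countable open `𝔅ˢ`-covers (adding finitely many
points to a member of `𝔅` keeps it in `𝔅`), and it makes TWO's moves along any play pairwise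
distinct. Indexing TWO's possible answers by `ℕ`, the histories of the pruned game form a countably
branching tree, so `S₁` can be applied once to the countably many covers at all its nodes. Following
at each node the child selected there gives a play against `σ` whose moves form an infinite
subfamily of the selected `γ_{𝔅ˢ}`-cover, hence a `γ_{𝔅ˢ}`-cover: `σ` is not winning.
-/

namespace BornologyOn

variable (𝔅 : BornologyOn X)

lemma singleton_mem (x : X) : {x} ∈ 𝔅.sets := by
  obtain ⟨A, hA, hx⟩ := 𝔅.covers x
  exact 𝔅.subset_mem hA (singleton_subset_iff.mpr hx)

lemma union_finite_mem {B D : Set X} (hB : B ∈ 𝔅.sets) (hD : D.Finite) : B ∪ D ∈ 𝔅.sets := by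
  induction D, hD using Set.Finite.induction_on with
  | empty => simpa using hB
  | @insert a s _ _ ih =>
    rw [union_insert, insert_eq]
    exact 𝔅.union_mem (𝔅.singleton_mem a) ih

end BornologyOn

lemma enlarge_mono {B B' : Set X} (h : B ⊆ B') (δ : ℝ) : enlarge B δ ⊆ enlarge B' δ :=
  biUnion_subset_biUnion_left h

lemma subset_enlarge {B : Set X} {δ : ℝ} (hδ : 0 < δ) : B ⊆ enlarge B δ :=
  fun _ hx => mem_biUnion hx (mem_ball_self hδ)

section Covers

variable {𝔅 : BornologyOn X}

lemma diff_mem_OBs {𝒰 F : Set (Set X)} (h𝒰 : 𝒰 ∈ OBs 𝔅) (hF : F.Finite) : 𝒰 \ F ∈ OBs 𝔅 := by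
  obtain ⟨hcount, hopen, -, huniv, hB⟩ := h𝒰
  have hmiss : ∀ U ∈ F ∩ 𝒰, ∃ x, x ∉ U := fun U hU =>
    (ne_univ_iff_exists_notMem U).mp fun h => huniv (h ▸ hU.2)
  choose pt hpt using hmiss
  have : Finite ↥(F ∩ 𝒰) := (hF.inter_of_left 𝒰).to_subtype
  -- Enlarging `B` by one point outside each removed member rules those members out.
  have hB' : ∀ B ∈ 𝔅.sets, ∃ U ∈ 𝒰 \ F, ∃ δ > 0, enlarge B δ ⊆ U := by
    intro B hBmem
    obtain ⟨U, hU, δ, hδ, hsub⟩ := hB _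
      (𝔅.union_finite_mem hBmem (finite_range fun U : ↥(F ∩ 𝒰) => pt U.1 U.2))
    refine ⟨U, ⟨hU, fun hUF => ?_⟩, δ, hδ, (enlarge_mono subset_union_left δ).trans hsub⟩
    exact hpt U ⟨hUF, hU⟩ (hsub (subset_enlarge hδ (Or.inr ⟨⟨U, hUF, hU⟩, rfl⟩)))
  refine ⟨hcount.mono sdiff_subset, fun U hU => hopen U hU.1, fun x => ?_, fun h => huniv h.1, hB'⟩
  obtain ⟨U, hU, δ, hδ, hsub⟩ := hB' {x} (𝔅.singleton_mem x)
  exact ⟨U, hU, hsub (subset_enlarge hδ rfl)⟩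

lemma mem_GBs_of_subset {𝒱 𝒲 : Set (Set X)} (h𝒱 : 𝒱 ∈ GBs 𝔅) (hsub : 𝒲 ⊆ 𝒱)
    (hinf : 𝒲.Infinite) : 𝒲 ∈ GBs 𝔅 := by
  obtain ⟨hcount, -, hopen, hfin⟩ := h𝒱
  exact ⟨hcount.mono hsub, hinf, fun U hU => hopen U (hsub hU),
    fun B hB => (hfin B hB).subset fun U hU => ⟨hsub hU.1, hU.2⟩⟩

end Covers

section Tree

variable {α : Type*}

/-- The history reached at node `s` (read from right to left) when the `k`-th child of
history `h` appends `E h k`. -/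
def treeHistory (E : List α → ℕ → α) : List ℕ → List α
  | [] => []
  | k :: s => treeHistory E s ++ [E (treeHistory E s) k]

lemma exists_branch_treeHistory (E : List α → ℕ → α) (V : List ℕ → α)
    (hV : ∀ s, V s ∈ range (E (treeHistory E s))) :
    ∃ play : ℕ → α, ∀ n, ∃ s, treeHistory E s = List.ofFn (fun i : Fin n => play i) ∧
      play n = V s := by
  choose K hK using hV
  let node : ℕ → List ℕ := fun n => Nat.rec [] (fun _ s => K s :: s) n
  refine ⟨fun n => V (node n), fun n => ⟨node n, ?_, rfl⟩⟩
  induction n with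
  | zero => rfl
  | succ n ih =>
    change treeHistory E (node n) ++ [E (treeHistory E (node n)) (K (node n))] = _
    rw [hK, ih, List.ofFn_succ', List.concat_eq_append]
    rfl

lemma injective_of_notMem_ofFn {play : ℕ → α}
    (h : ∀ n, play n ∉ List.ofFn (fun i : Fin n => play i)) : Function.Injective play := by
  have hlt : ∀ m n, m < n → play m ≠ play n := fun m n hmn heq =>
    h n (List.mem_ofFn.mpr ⟨⟨m, hmn⟩, heq⟩)
  intro m n heq
  by_contra hne
  rcases Nat.lt_or_gt_of_ne hne with hmn | hnm
  · exact hlt m n hmn heq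
  · exact hlt n m hnm heq.symm

end Tree

section Games

variable {Y : Type*} {𝒜 ℬ : Set (Set (Set Y))}

lemma S1.nonempty_of_mem (hS1 : S1 𝒜 ℬ) {𝒰 : Set (Set Y)} (h𝒰 : 𝒰 ∈ 𝒜) : 𝒰.Nonempty :=
  ⟨_, ((hS1 (fun _ => 𝒰) fun _ => h𝒰).choose_spec.1 0)⟩

lemma S1_of_not_oneWinsG1 (h : ¬ OneWinsG1 𝒜 ℬ) : S1 𝒜 ℬ := by
  intro 𝒰 h𝒰
  by_contra hS
  exact h ⟨fun l => 𝒰 l.length, fun l => h𝒰 _, fun play hplay hrange =>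
    hS ⟨play, fun n => by simpa using hplay n, hrange⟩⟩

theorem S1.not_oneWinsG1 (hcount : ∀ 𝒰 ∈ 𝒜, 𝒰.Countable)
    (hdiff : ∀ 𝒰 ∈ 𝒜, ∀ F : Set (Set Y), F.Finite → 𝒰 \ F ∈ 𝒜)
    (hsub : ∀ 𝒱 ∈ ℬ, ∀ 𝒲 ⊆ 𝒱, 𝒲.Infinite → 𝒲 ∈ ℬ) (hS1 : S1 𝒜 ℬ) :
    ¬ OneWinsG1 𝒜 ℬ := by
  rintro ⟨σ, hσ, hwin⟩
  let C : List (Set Y) → Set (Set Y) := fun l => σ l \ {U | U ∈ l}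
  have hC : ∀ l, C l ∈ 𝒜 := fun l => hdiff _ (hσ l) _ (List.finite_toSet l)
  choose E hE using fun l => (hcount _ (hC l)).exists_eq_range (hS1.nonempty_of_mem (hC l))
  obtain ⟨sel, hsel, hrange⟩ :=
    hS1 (fun n => C (treeHistory E (Denumerable.ofNat (List ℕ) n))) fun n => hC _
  have hselC : ∀ s, sel (Encodable.encode s) ∈ C (treeHistory E s) := fun s => by
    simpa using hsel (Encodable.encode s)
  obtain ⟨play, hplay⟩ := exists_branch_treeHistory E (fun s => sel (Encodable.encode s))
    fun s => hE _ ▸ hselC s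
  have hlegal : ∀ n, play n ∈ C (List.ofFn fun i : Fin n => play i) := fun n => by
    obtain ⟨s, hs, hn⟩ := hplay n
    exact hs ▸ hn ▸ hselC s
  refine hwin play (fun n => (hlegal n).1) (hsub _ hrange _ ?_ ?_)
  · rintro _ ⟨n, rfl⟩
    obtain ⟨s, -, hn⟩ := hplay n
    exact ⟨_, hn.symm⟩
  · exact infinite_range_of_injective (injective_of_notMem_ofFn fun n => (hlegal n).2)

end Games

theorem stmt12_general (𝔅 : BornologyOn X) :
    S1 (OBs 𝔅) (GBs 𝔅) ↔ ¬ OneWinsG1 (OBs 𝔅) (GBs 𝔅) :=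
  ⟨S1.not_oneWinsG1 (fun _ h => h.1) (fun _ h _ hF => diff_mem_OBs h hF)
      (fun _ h _ hsub hinf => mem_GBs_of_subset h hsub hinf),
    S1_of_not_oneWinsG1⟩

theorem stmt12 (𝔅 : BornologyOn X) (hcb : HasClosedBase 𝔅)
    (hX : Set.univ ∉ 𝔅.sets) :
    S1 (OBs 𝔅) (GBs 𝔅) ↔ ¬ OneWinsG1 (OBs 𝔅) (GBs 𝔅) :=
  stmt12_general 𝔅
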